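/- arXiv:2106.01845 — 3 statements merged into one kernel-verified Lean document; each statement's English description precedes it below -/
import Mathlib

section
/- Let k be a commutative ring, k[x] the polynomial ring graded with deg x = d > 0, and p a prime. Then the p-typical Witt vectors of k[x] in the graded sense, W(k[x])_j = Π_{i≥0} (k[x])_{jp^i}, are isomorphic as a graded ring to W(k)[x]: i.e., each graded piece W(k[x])_{md} for m ≥ 0 has underlying set Π_{i≥0} k·x^{mp^i}, and the induced ring structure agrees with that of polynomials over W(k). -/
open Polynomial

/-- The degree-`m` component map `W(k) → W(k[x])`, `b ↦ (b_i · x^{m·p^i})_i`, realizing the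
graded piece `W(k[x])_{m·d}` of the graded Witt vectors (with `deg x = d`). -/
noncomputable def gradedWittPiece (p : ℕ) [hp : Fact p.Prime] (k : Type*) [CommRing k]
    (m : ℕ) (b : WittVector p k) : WittVector p (Polynomial k) :=
  WittVector.mk p (fun i => Polynomial.C (b.coeff i) * X ^ (m * p ^ i))

section Aux

variable {p : ℕ} [hp : Fact p.Prime]

lemma coeff_gradedWittPiece {k : Type*} [CommRing k] (m : ℕ) (b : WittVector p k) (i : ℕ) :
    (gradedWittPiece p k m b).coeff i = Polynomial.C (b.coeff i) * X ^ (m * p ^ i) := by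
  simp [gradedWittPiece, WittVector.coeff_mk]

lemma ghost_gradedWittPiece {k : Type*} [CommRing k] (m n : ℕ) (b : WittVector p k) :
    WittVector.ghostComponent n (gradedWittPiece p k m b)
      = Polynomial.C (WittVector.ghostComponent n b) * X ^ (m * p ^ n) := by
  rw [WittVector.ghostComponent_apply, WittVector.ghostComponent_apply,
      aeval_wittPolynomial, aeval_wittPolynomial, map_sum, Finset.sum_mul]
  refine Finset.sum_congr rfl fun i hi => ?_
  rw [Finset.mem_range] at hi
  have h1 : m * p ^ i * p ^ (n - i) = m * p ^ n := by
    rw [mul_assoc, ← pow_add]; congr 2; omega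
  rw [coeff_gradedWittPiece, mul_pow, ← pow_mul, h1]
  simp only [map_mul, map_pow, map_natCast]
  ring

lemma wittMap_injective {R S : Type*} [CommRing R] [CommRing S] (f : R →+* S)
    (hf : Function.Injective f) :
    Function.Injective (WittVector.map (p := p) f) := fun x y h =>
  WittVector.ext fun n => hf (by rw [← WittVector.map_coeff, ← WittVector.map_coeff, h])

lemma map_gradedWittPiece {R S : Type*} [CommRing R] [CommRing S] (f : R →+* S) (m : ℕ)
    (b : WittVector p R) :
    WittVector.map (Polynomial.mapRingHom f) (gradedWittPiece p R m b)
      = gradedWittPiece p S m (WittVector.map f b) := by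
  refine WittVector.ext fun n => ?_
  simp [WittVector.map_coeff, coeff_gradedWittPiece, Polynomial.map_mul, Polynomial.map_pow]

lemma gradedWittPiece_add_of_invertible {S : Type*} [CommRing S] [Invertible (p : S)] (m : ℕ)
    (b c : WittVector p S) :
    gradedWittPiece p S m (b + c) = gradedWittPiece p S m b + gradedWittPiece p S m c := by
  haveI : Invertible (p : Polynomial S) := by
    have := Invertible.map (C : S →+* Polynomial S) (p : S)
    rwa [map_natCast] at this
  apply (WittVector.ghostMap.bijective_of_invertible p (Polynomial S)).1
  funext n
  simp only [WittVector.ghostMap_apply, Pi.add_apply, map_add, ghost_gradedWittPiece, add_mul]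

lemma gradedWittPiece_mul_of_invertible {S : Type*} [CommRing S] [Invertible (p : S)] (m m' : ℕ)
    (b c : WittVector p S) :
    gradedWittPiece p S m b * gradedWittPiece p S m' c
      = gradedWittPiece p S (m + m') (b * c) := by
  haveI : Invertible (p : Polynomial S) := by
    have := Invertible.map (C : S →+* Polynomial S) (p : S)
    rwa [map_natCast] at this
  apply (WittVector.ghostMap.bijective_of_invertible p (Polynomial S)).1
  funext n
  simp only [WittVector.ghostMap_apply, Pi.mul_apply, map_mul, ghost_gradedWittPiece,
    add_mul, pow_add]
  ring

variable (p) in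
noncomputable def liftWitt {k : Type*} [CommRing k] (b : WittVector p k) :
    WittVector p (MvPolynomial k ℤ) :=
  WittVector.mk p fun i => (MvPolynomial.counit_surjective k (b.coeff i)).choose

lemma map_liftWitt {k : Type*} [CommRing k] (b : WittVector p k) :
    WittVector.map (MvPolynomial.counit k) (liftWitt p b) = b :=
  WittVector.ext fun n => by
    rw [WittVector.map_coeff, liftWitt, WittVector.coeff_mk]
    exact (MvPolynomial.counit_surjective k (b.coeff n)).choose_spec

variable (p) in
noncomputable def invertibleQ {k : Type*} [CommRing k] : Invertible (p : MvPolynomial k ℚ) := by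
  haveI : Invertible (p : ℚ) :=
    invertibleOfNonzero (by exact_mod_cast hp.out.ne_zero)
  have := Invertible.map (algebraMap ℚ (MvPolynomial k ℚ)) (p : ℚ)
  rwa [map_natCast] at this

lemma gradedWittPiece_add_int {k : Type*} [CommRing k] (m : ℕ)
    (b c : WittVector p (MvPolynomial k ℤ)) :
    gradedWittPiece p _ m (b + c) = gradedWittPiece p _ m b + gradedWittPiece p _ m c := by
  haveI := invertibleQ p (k := k)
  apply wittMap_injective (Polynomial.mapRingHom (MvPolynomial.map (Int.castRingHom ℚ)))
    (Polynomial.map_injective _ (MvPolynomial.map_injective _ Int.cast_injective))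
  rw [map_add, map_gradedWittPiece, map_gradedWittPiece, map_gradedWittPiece, map_add]
  exact gradedWittPiece_add_of_invertible _ _ _

lemma gradedWittPiece_mul_int {k : Type*} [CommRing k] (m m' : ℕ)
    (b c : WittVector p (MvPolynomial k ℤ)) :
    gradedWittPiece p _ m b * gradedWittPiece p _ m' c
      = gradedWittPiece p _ (m + m') (b * c) := by
  haveI := invertibleQ p (k := k)
  apply wittMap_injective (Polynomial.mapRingHom (MvPolynomial.map (Int.castRingHom ℚ)))
    (Polynomial.map_injective _ (MvPolynomial.map_injective _ Int.cast_injective))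
  rw [map_mul, map_gradedWittPiece, map_gradedWittPiece, map_gradedWittPiece, map_mul]
  exact gradedWittPiece_mul_of_invertible _ _ _ _

lemma gradedWittPiece_add {k : Type*} [CommRing k] (m : ℕ) (b c : WittVector p k) :
    gradedWittPiece p k m (b + c) = gradedWittPiece p k m b + gradedWittPiece p k m c := by
  conv_lhs => rw [← map_liftWitt b, ← map_liftWitt c]
  rw [← map_add, ← map_gradedWittPiece, gradedWittPiece_add_int, map_add,
    map_gradedWittPiece, map_gradedWittPiece, map_liftWitt, map_liftWitt]

lemma gradedWittPiece_mul {k : Type*} [CommRing k] (m m' : ℕ) (b c : WittVector p k) :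
    gradedWittPiece p k m b * gradedWittPiece p k m' c
      = gradedWittPiece p k (m + m') (b * c) := by
  conv_lhs => rw [← map_liftWitt b, ← map_liftWitt c]
  rw [← map_gradedWittPiece, ← map_gradedWittPiece, ← map_mul, gradedWittPiece_mul_int,
    map_gradedWittPiece, map_mul, map_liftWitt, map_liftWitt]

end Aux

/-- Let `k` be a commutative ring and `k[x]` graded with `deg x = d > 0`. The graded `p`-typical
Witt vectors of `k[x]`, with `W(k[x])_{m·d} = Π_{i≥0} k·x^{m·p^i}`, are isomorphic as a graded
ring to `W(k)[x]`: the component maps `b ↦ (b_i x^{m p^i})_i` are injective and additive, they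
are multiplicative across degrees (`φ_m(b)·φ_{m'}(c) = φ_{m+m'}(b·c)`), and their ranges exhaust
the graded pieces. -/
theorem stmt_14 (p : ℕ) [hp : Fact p.Prime] (k : Type*) [CommRing k] (d : ℕ) (hd : 0 < d) :
    (∀ m : ℕ, Function.Injective (gradedWittPiece p k m)) ∧
    (∀ (m : ℕ) (b c : WittVector p k),
      gradedWittPiece p k m (b + c) = gradedWittPiece p k m b + gradedWittPiece p k m c) ∧
    (∀ (m m' : ℕ) (b c : WittVector p k),
      gradedWittPiece p k m b * gradedWittPiece p k m' c = gradedWittPiece p k (m + m') (b * c)) ∧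
    (∀ (m : ℕ) (f : WittVector p (Polynomial k)),
      (∀ i : ℕ, f.coeff i ∈ Submodule.span k {(X : Polynomial k) ^ (m * p ^ i)}) →
      ∃ b : WittVector p k, f = gradedWittPiece p k m b) := by
  refine ⟨?_, fun m b c => gradedWittPiece_add m b c,
    fun m m' b c => gradedWittPiece_mul m m' b c, ?_⟩
  · intro m b c h
    refine WittVector.ext fun n => ?_
    have := congrArg (fun f => (f.coeff n).coeff (m * p ^ n)) h
    simpa [coeff_gradedWittPiece, Polynomial.coeff_C_mul, Polynomial.coeff_X_pow] using this
  · intro m f hf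
    choose a ha using fun i => Submodule.mem_span_singleton.mp (hf i)
    refine ⟨WittVector.mk p a, WittVector.ext fun n => ?_⟩
    rw [coeff_gradedWittPiece, WittVector.coeff_mk, ← ha n, Polynomial.smul_eq_C_mul]
end

section
/- Let p be a prime and let S_m ∈ ℤ[x_0,…,x_m,y_0,…,y_m] denote the m-th Witt vector addition polynomial. Then S_m is homogeneous of degree j·p^m when each variable x_i and y_i is assigned degree j·p^i, for any positive integer j. -/
open MvPolynomial Finset

namespace Stmt16Aux

variable {σ : Type*}

theorem pow_hom {w : σ → ℕ} {φ : MvPolynomial σ ℤ} {m : ℕ}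
    (h : φ.IsWeightedHomogeneous w m) (k : ℕ) :
    (φ ^ k).IsWeightedHomogeneous w (k * m) := by
  induction k with
  | zero => simpa using isWeightedHomogeneous_one ℤ w
  | succ k ih =>
    rw [pow_succ, Nat.succ_mul]
    exact ih.mul h

theorem of_C_mul {w : σ → ℕ} {φ : MvPolynomial σ ℤ} {a : ℤ} (ha : a ≠ 0) {m : ℕ}
    (h : (C a * φ).IsWeightedHomogeneous w m) : φ.IsWeightedHomogeneous w m := by
  intro d hd
  apply h
  rw [coeff_C_mul]
  exact mul_ne_zero ha hd

theorem rename_witt_hom (p : ℕ) [Fact p.Prime] (j n : ℕ) (b : Fin 2) :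
    (rename (Prod.mk b) (wittPolynomial p ℤ n)).IsWeightedHomogeneous
      (fun bi : Fin 2 × ℕ => j * p ^ bi.2) (j * p ^ n) := by
  rw [wittPolynomial, map_sum]
  apply IsWeightedHomogeneous.sum
  intro i hi
  rw [rename_monomial]
  apply isWeightedHomogeneous_monomial
  rw [Finsupp.mapDomain_single, Finsupp.weight_apply, Finsupp.sum_single_index]
  · have hin : i ≤ n := Nat.lt_succ_iff.mp (mem_range.mp hi)
    simp only [smul_eq_mul]
    rw [mul_comm j (p ^ i), ← mul_assoc, ← pow_add, Nat.sub_add_cancel hin, mul_comm]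
  · simp

theorem main (p : ℕ) [hp : Fact p.Prime] (j : ℕ) (n : ℕ) :
    (WittVector.wittAdd p n).IsWeightedHomogeneous
      (fun bi : Fin 2 × ℕ => j * p ^ bi.2) (j * p ^ n) := by
  induction n using Nat.strong_induction_on with
  | _ n IH =>
  have key := wittStructureInt_prop p (X 0 + X 1 : MvPolynomial (Fin 2) ℤ) n
  rw [show (wittStructureInt p (X 0 + X 1 : MvPolynomial (Fin 2) ℤ)) = WittVector.wittAdd p
    from rfl] at key
  rw [bind₁, aeval_wittPolynomial, map_add, bind₁_X_right, bind₁_X_right,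
    Finset.sum_range_succ, Nat.sub_self, pow_zero, pow_one] at key
  have heq : (C ((p : ℤ) ^ n)) * WittVector.wittAdd p n =
      (rename (Prod.mk 0) (wittPolynomial p ℤ n) + rename (Prod.mk 1) (wittPolynomial p ℤ n))
      - ∑ i ∈ range n, (p : MvPolynomial (Fin 2 × ℕ) ℤ) ^ i *
          WittVector.wittAdd p i ^ p ^ (n - i) := by
    rw [map_pow, C_eq_coe_nat, ← key]
    ring
  apply of_C_mul (a := (p : ℤ) ^ n) (pow_ne_zero _ (Int.natCast_ne_zero.mpr hp.1.ne_zero))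
  rw [heq]
  rw [← mem_weightedHomogeneousSubmodule ℤ]
  apply sub_mem
  · exact (mem_weightedHomogeneousSubmodule ℤ _ _ _).mpr
      ((rename_witt_hom p j n 0).add (rename_witt_hom p j n 1))
  · apply Submodule.sum_mem
    intro i hi
    rw [mem_weightedHomogeneousSubmodule]
    have hin : i ≤ n := le_of_lt (mem_range.mp hi)
    have h1 : ((p : MvPolynomial (Fin 2 × ℕ) ℤ) ^ i).IsWeightedHomogeneous
        (fun bi : Fin 2 × ℕ => j * p ^ bi.2) 0 := by
      rw [show ((p : MvPolynomial (Fin 2 × ℕ) ℤ) ^ i) = C ((p : ℤ) ^ i) by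
        rw [map_pow, C_eq_coe_nat]]
      exact isWeightedHomogeneous_C _ _
    have h2 := pow_hom (IH i (mem_range.mp hi)) (p ^ (n - i))
    have hdeg : p ^ (n - i) * (j * p ^ i) = j * p ^ n := by
      rw [mul_comm j (p ^ i), ← mul_assoc, ← pow_add, Nat.sub_add_cancel hin, mul_comm]
    rw [hdeg] at h2
    simpa using h1.mul h2

end Stmt16Aux

/-- The `m`-th Witt vector addition polynomial `S_m` is weighted homogeneous of degree
`j·p^m` when each variable `x_i`, `y_i` is assigned degree `j·p^i`, for any `j > 0`. -/
theorem stmt_16 (p : ℕ) [hp : Fact p.Prime] (m : ℕ) (j : ℕ) (hj : 0 < j) :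
    (WittVector.wittAdd p m).IsWeightedHomogeneous
      (fun bi : Fin 2 × ℕ => j * p ^ bi.2) (j * p ^ m) :=
  Stmt16Aux.main p j m
end

section
/- Let p be an odd prime and k a field of characteristic p. Let H* = k[x,y] with x primitive and ψ(y) = y⊗1 + 1⊗y + Σ_{i=1}^{p−1} (1/(i!(p−i)!)) x^{pi} ⊗ x^{p(p−i)}. Then the set of primitive elements of H* is spanned by { x^{p^k} : k ≥ 0 }; in particular y is not primitive and no element of the form y + (polynomial in x) is primitive except those in the span of p-powers of x. -/
open TensorProduct MvPolynomial

private lemma aux_dvd_choose_pb {p : ℕ} (hp : p.Prime) : ∀ β, 1 ≤ β → p ∣ (p * β).choose β := by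
  intro β
  induction β using Nat.strong_induction_on with
  | _ β ih =>
    intro hβ
    haveI : Fact p.Prime := ⟨hp⟩
    have hmod := (Choose.choose_modEq_choose_mod_mul_choose_div_nat (n := p * β) (k := β) (p := p))
    have h1 : (p * β) % p = 0 := Nat.mul_mod_right p β
    have h2 : (p * β) / p = β := Nat.mul_div_cancel_left β hp.pos
    rw [h1, h2] at hmod
    rcases Nat.eq_zero_or_pos (β % p) with h0 | hpos
    · -- p ∣ β
      have hdvd : p ∣ β := Nat.dvd_of_mod_eq_zero h0
      obtain ⟨γ, rfl⟩ := hdvd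
      have hγ : 1 ≤ γ := by
        rcases Nat.eq_zero_or_pos γ with h0' | h1'
        · subst h0'; simp at hβ
        · exact h1'
      have hγlt : γ < p * γ := by
        have := hp.two_le; nlinarith
      have := ih γ hγlt hγ
      rw [h0] at hmod
      have hdiv : p * γ / p = γ := Nat.mul_div_cancel_left γ hp.pos
      rw [hdiv] at hmod
      simp only [Nat.choose_self, Nat.choose_zero_right, one_mul] at hmod
      exact (Nat.modEq_zero_iff_dvd.mp (hmod.trans ((Nat.modEq_zero_iff_dvd).mpr this)))
    · -- β % p ≠ 0 : choose 0 (β % p) = 0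
      have : (0 : ℕ).choose (β % p) = 0 := Nat.choose_eq_zero_of_lt hpos
      rw [this, zero_mul] at hmod
      exact Nat.modEq_zero_iff_dvd.mp hmod

private lemma aux_dvd_choose_p2b {p : ℕ} (hp : p.Prime) (β : ℕ) (hβ : 1 ≤ β) :
    p ∣ (p * p * β).choose (p * β) := by
  haveI : Fact p.Prime := ⟨hp⟩
  have hmod := (Choose.choose_modEq_choose_mod_mul_choose_div_nat (n := p * p * β) (k := p * β) (p := p))
  have h1 : (p * p * β) % p = 0 := by
    have : p * p * β = p * (p * β) := by ring
    rw [this]; exact Nat.mul_mod_right p _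
  have h2 : (p * β) % p = 0 := Nat.mul_mod_right p β
  have h3 : (p * p * β) / p = p * β := by
    have : p * p * β = p * (p * β) := by ring
    rw [this]; exact Nat.mul_div_cancel_left _ hp.pos
  have h4 : (p * β) / p = β := Nat.mul_div_cancel_left β hp.pos
  rw [h1, h2, h3, h4, Nat.choose_self, one_mul] at hmod
  exact Nat.modEq_zero_iff_dvd.mp
    (hmod.trans (Nat.modEq_zero_iff_dvd.mpr (aux_dvd_choose_pb hp β hβ)))

private lemma aux_not_dvd_choose_ppow {p : ℕ} (hp : p.Prime) :
    ∀ v u, ¬ p ∣ u → 2 ≤ u → ¬ p ∣ (p ^ v * u).choose (p ^ v) := by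
  intro v
  haveI : Fact p.Prime := ⟨hp⟩
  induction v with
  | zero =>
    intro u hu h2
    simpa [Nat.choose_one_right] using hu
  | succ v ih =>
    intro u hu h2
    have hmod := (Choose.choose_modEq_choose_mod_mul_choose_div_nat
      (n := p ^ (v+1) * u) (k := p ^ (v+1)) (p := p))
    have h1 : (p ^ (v+1) * u) % p = 0 := by
      have : p ^ (v+1) * u = p * (p ^ v * u) := by ring
      rw [this]; exact Nat.mul_mod_right p _
    have h2' : (p ^ (v+1)) % p = 0 := by
      have : p ^ (v+1) = p * p ^ v := by ring
      rw [this]; exact Nat.mul_mod_right p _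
    have h3 : (p ^ (v+1) * u) / p = p ^ v * u := by
      have : p ^ (v+1) * u = p * (p ^ v * u) := by ring
      rw [this]; exact Nat.mul_div_cancel_left _ hp.pos
    have h4 : (p ^ (v+1)) / p = p ^ v := by
      have : p ^ (v+1) = p * p ^ v := by ring
      rw [this]; exact Nat.mul_div_cancel_left _ hp.pos
    rw [h1, h2', h3, h4, Nat.choose_self, one_mul] at hmod
    intro hdvd
    exact ih u hu h2 (Nat.modEq_zero_iff_dvd.mp ((hmod.symm).trans (Nat.modEq_zero_iff_dvd.mpr hdvd)))

private lemma aux_exists_choose_not_dvd {p : ℕ} (hp : p.Prime) {α : ℕ} (hα : 1 ≤ α)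
    (h : ∀ w : ℕ, α ≠ p ^ w) : ∃ s, 0 < s ∧ s < α ∧ ¬ p ∣ α.choose s := by
  set v := α.factorization p with hv
  have hord : p ^ v * (α / p ^ v) = α := Nat.ordProj_mul_ordCompl_eq_self α p
  set u := α / p ^ v with hu
  have hpu : ¬ p ∣ u := Nat.not_dvd_ordCompl hp (by omega)
  have hu1 : 1 ≤ u := by
    rcases Nat.eq_zero_or_pos u with h0 | h1
    · rw [h0, mul_zero] at hord; omega
    · exact h1
  have hu2 : 2 ≤ u := by
    have hne : u ≠ 1 := by
      intro h1
      rw [h1, mul_one] at hord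
      exact (h v) hord.symm
    omega
  refine ⟨p ^ v, pow_pos hp.pos v, ?_, ?_⟩
  · calc p ^ v = p ^ v * 1 := (mul_one _).symm
      _ < p ^ v * u := (Nat.mul_lt_mul_left (pow_pos hp.pos v)).mpr (by omega)
      _ = α := hord
  · rw [← hord]
    exact aux_not_dvd_choose_ppow hp v u hpu hu2

private lemma aux_fin2_ext {m m' : Fin 2 →₀ ℕ} (h0 : m 0 = m' 0) (h1 : m 1 = m' 1) : m = m' := by
  ext i
  revert i
  rw [Fin.forall_fin_two]
  exact ⟨h0, h1⟩

private lemma aux_m_decomp (m : Fin 2 →₀ ℕ) :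
    m = Finsupp.single 0 (m 0) + Finsupp.single 1 (m 1) := by
  apply aux_fin2_ext <;> simp

private lemma aux_degree_fin2 (m : Fin 2 →₀ ℕ) : m.degree = m 0 + m 1 := by
  rw [Finsupp.degree, ← Fin.sum_univ_two (f := fun i => m i)]
  apply Finset.sum_subset (Finset.subset_univ m.support)
  intro i _ hi
  exact Finsupp.notMem_support_iff.mp hi

private lemma aux_degree_st (s t : ℕ) :
    (Finsupp.single (0 : Fin 2) s + Finsupp.single 1 t).degree = s + t := by
  rw [aux_degree_fin2]
  simp

-- coefficient of X0^s X1^t in (X0+X1)^n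
private lemma aux_coeff_A_pow {k : Type*} [CommRing k] (s t n : ℕ) :
    coeff (Finsupp.single 0 s + Finsupp.single 1 t)
      ((X 0 + X 1 : MvPolynomial (Fin 2) k) ^ n) =
      if s + t = n then (n.choose s : k) else 0 := by
  rw [add_pow]
  rw [MvPolynomial.coeff_sum]
  have hterm : ∀ i : ℕ, (X 0 : MvPolynomial (Fin 2) k) ^ i * X 1 ^ (n - i) * (n.choose i : MvPolynomial (Fin 2) k)
      = monomial (Finsupp.single 0 i + Finsupp.single 1 (n - i)) ((n.choose i : k)) := by
    intro i
    rw [X_pow_eq_monomial, X_pow_eq_monomial, monomial_mul, mul_one]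
    rw [← MvPolynomial.C_eq_coe_nat, mul_comm, C_mul_monomial, mul_one]
  by_cases hst : s + t = n
  · rw [if_pos hst]
    rw [Finset.sum_eq_single s]
    · have hns : n - s = t := by omega
      rw [hterm s, hns, coeff_monomial, if_pos rfl]
    · intro i hi hne
      rw [hterm i, coeff_monomial, if_neg]
      intro heq
      have h0 := DFunLike.congr_fun heq (0 : Fin 2)
      simp at h0
      exact hne h0
    · intro hs
      exfalso
      apply hs
      rw [Finset.mem_range]
      omega
  · rw [if_neg hst]
    apply Finset.sum_eq_zero
    intro i hi
    rw [hterm i, coeff_monomial, if_neg]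
    intro heq
    have h0 := DFunLike.congr_fun heq (0 : Fin 2)
    have h1 := DFunLike.congr_fun heq (1 : Fin 2)
    simp at h0 h1
    rw [Finset.mem_range] at hi
    omega

private lemma aux_coeff_X0_pow {k : Type*} [CommRing k] (M : Fin 2 →₀ ℕ) (a : ℕ) (hM : M 1 ≠ 0) :
    coeff M ((X 0 : MvPolynomial (Fin 2) k) ^ a) = 0 := by
  rw [X_pow_eq_monomial, coeff_monomial, if_neg]
  intro heq
  have h1 := DFunLike.congr_fun heq (1 : Fin 2)
  simp at h1
  exact hM h1.symm

private lemma aux_coeff_X1_pow {k : Type*} [CommRing k] (M : Fin 2 →₀ ℕ) (a : ℕ) (hM : M 0 ≠ 0) :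
    coeff M ((X 1 : MvPolynomial (Fin 2) k) ^ a) = 0 := by
  rw [X_pow_eq_monomial, coeff_monomial, if_neg]
  intro heq
  have h1 := DFunLike.congr_fun heq (0 : Fin 2)
  simp at h1
  exact hM h1.symm

-- aeval over Fin 2 as a support sum
private lemma aux_aeval_support {k : Type*} [CommRing k] {B : Type*} [CommRing B] [Algebra k B]
    (z : MvPolynomial (Fin 2) k) (v : Fin 2 → B) :
    aeval v z = ∑ m ∈ z.support, (coeff m z) • (v 0 ^ (m 0) * v 1 ^ (m 1)) := by
  conv_lhs => rw [← support_sum_monomial_coeff z]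
  rw [map_sum]
  apply Finset.sum_congr rfl
  intro m _
  rw [aeval_monomial, Algebra.smul_def]
  congr 1
  rw [Finsupp.prod_fintype]
  · exact Fin.prod_univ_two _
  · intro i; exact pow_zero _

private lemma aux_T1 {k : Type*} [CommRing k] (A' : MvPolynomial (Fin 2) k) (a b j : ℕ) :
    (Polynomial.C A' ^ a * Polynomial.X ^ b).coeff j = if b = j then A' ^ a else 0 := by
  rw [← map_pow, Polynomial.coeff_C_mul, Polynomial.coeff_X_pow]
  by_cases h : j = b
  · subst h; simp
  · rw [if_neg h, if_neg (fun hh => h hh.symm), mul_zero]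

private lemma aux_T2 {k : Type*} [CommRing k] (x0 : MvPolynomial (Fin 2) k) (a b j : ℕ) :
    (Polynomial.C x0 ^ a * (0 : Polynomial (MvPolynomial (Fin 2) k)) ^ b).coeff j =
      if b = 0 ∧ j = 0 then x0 ^ a else 0 := by
  cases b with
  | zero =>
    rw [pow_zero, mul_one, ← map_pow, Polynomial.coeff_C]
    simp
  | succ b =>
    rw [zero_pow (Nat.succ_ne_zero b), mul_zero, Polynomial.coeff_zero]
    simp

private lemma aux_T3 {k : Type*} [CommRing k] (x1 S : MvPolynomial (Fin 2) k) (a b j : ℕ) :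
    (Polynomial.C x1 ^ a * (Polynomial.X - Polynomial.C S) ^ b).coeff j =
      x1 ^ a * ((-S) ^ (b - j) * (b.choose j : MvPolynomial (Fin 2) k)) := by
  rw [sub_eq_add_neg, ← Polynomial.C_neg, ← map_pow, Polynomial.coeff_C_mul,
    Polynomial.coeff_X_add_C_pow]

private lemma aux_coeff_X0_pow_mul {k : Type*} [CommRing k] (M : Fin 2 →₀ ℕ) (E : ℕ)
    (f : MvPolynomial (Fin 2) k) (h : M 0 < E) :
    coeff M ((X 0 : MvPolynomial (Fin 2) k) ^ E * f) = 0 := by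
  rw [X_pow_eq_monomial, coeff_monomial_mul', if_neg]
  rw [Finsupp.single_le_iff]
  omega

private lemma aux_S_hom {k : Type*} [Field k] (p : ℕ) (hp2 : 2 ≤ p) :
    (∑ i ∈ Finset.Ioo 0 p, ((i.factorial * (p - i).factorial : k))⁻¹ •
      ((X 0 : MvPolynomial (Fin 2) k) ^ (p * i) * X 1 ^ (p * (p - i)))).IsHomogeneous (p * p) := by
  apply IsHomogeneous.sum
  intro i hi
  rw [Finset.mem_Ioo] at hi
  have hrw : ((i.factorial * (p - i).factorial : k))⁻¹ •
      ((X 0 : MvPolynomial (Fin 2) k) ^ (p * i) * X 1 ^ (p * (p - i)))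
      = monomial (Finsupp.single 0 (p * i) + Finsupp.single 1 (p * (p - i)))
          (((i.factorial * (p - i).factorial : k))⁻¹) := by
    rw [X_pow_eq_monomial, X_pow_eq_monomial, monomial_mul, mul_one, smul_monomial,
      smul_eq_mul, mul_one]
  rw [hrw]
  apply isHomogeneous_monomial
  rw [aux_degree_st]
  have h1 : i + (p - i) = p := by omega
  rw [← Nat.mul_add, h1]

private lemma aux_coeff_S_pow {k : Type*} [Field k] (p : ℕ) (hp2 : 2 ≤ p) (β β' : ℕ)
    (hβ : 1 ≤ β) (hβ' : 1 ≤ β') :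
    coeff (Finsupp.single 0 (p * β) + Finsupp.single 1 (p * (p - 1) * β))
      ((∑ i ∈ Finset.Ioo 0 p, ((i.factorial * (p - i).factorial : k))⁻¹ •
        ((X 0 : MvPolynomial (Fin 2) k) ^ (p * i) * X 1 ^ (p * (p - i)))) ^ β') =
    if β' = β then (((Nat.factorial 1 : k) * ((p - 1).factorial : k))⁻¹) ^ β else 0 := by
  have hdegM : p * β + p * (p - 1) * β = p * p * β := by
    have hp1 : (p - 1) + 1 = p := by omega
    calc p * β + p * (p - 1) * β = p * ((p - 1) + 1) * β := by ring
      _ = p * p * β := by rw [hp1]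
  by_cases hbb : β' = β
  · subst hbb
    rw [if_pos rfl]
    have hmem1 : (1:ℕ) ∈ Finset.Ioo 0 p := Finset.mem_Ioo.mpr ⟨one_pos, by omega⟩
    rw [Finset.sum_eq_sum_sdiff_singleton_add hmem1]
    rw [add_pow, coeff_sum]
    rw [Finset.sum_eq_single 0]
    · rw [pow_zero, one_mul, Nat.sub_zero, Nat.choose_zero_right, Nat.cast_one, mul_one]
      rw [smul_pow, mul_pow, ← pow_mul, ← pow_mul]
      rw [coeff_smul, X_pow_eq_monomial, X_pow_eq_monomial, monomial_mul, mul_one,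
        coeff_monomial]
      rw [if_pos]
      · simp
      · congr 2 <;> ring
    · intro l hl hlne
      rw [Finset.mem_range] at hl
      have hl1 : 1 ≤ l := by omega
      obtain ⟨d, hd⟩ : ∃ d, β' = l + d := ⟨β' - l, by omega⟩
      subst hd
      have hsub : l + d - l = d := by omega
      set W := (∑ i ∈ Finset.Ioo 0 p \ {1}, ((i.factorial * (p - i).factorial : k))⁻¹ •
              ((X 0 : MvPolynomial (Fin 2) k) ^ (p * i - 2*p) * X 1 ^ (p * (p - i)))) with hW
      have hS₂W : (∑ i ∈ Finset.Ioo 0 p \ {1}, ((i.factorial * (p - i).factorial : k))⁻¹ •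
          ((X 0 : MvPolynomial (Fin 2) k) ^ (p * i) * X 1 ^ (p * (p - i))))
          = (X 0 : MvPolynomial (Fin 2) k) ^ (2*p) * W := by
        rw [hW, Finset.mul_sum]
        apply Finset.sum_congr rfl
        intro i hi
        rw [Finset.mem_sdiff, Finset.mem_Ioo, Finset.mem_singleton] at hi
        have h2le : 2 ≤ i := by omega
        have hle : 2*p ≤ p*i := by nlinarith
        have h2i : 2*p + (p*i - 2*p) = p*i := by omega
        rw [mul_smul_comm, ← mul_assoc, ← pow_add, h2i]
      have hM0 : ((Finsupp.single (0 : Fin 2) (p*(l+d)) + Finsupp.single 1 (p*(p-1)*(l+d))) :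
          Fin 2 →₀ ℕ) 0 = p*(l+d) := by simp
      rw [hsub, hS₂W, smul_pow, mul_smul_comm, smul_mul_assoc, coeff_smul]
      rw [show ((X 0 : MvPolynomial (Fin 2) k) ^ (2*p) * W) ^ l *
            ((X 0 : MvPolynomial (Fin 2) k) ^ (p*1) *
              (X 1 : MvPolynomial (Fin 2) k) ^ (p*(p-1))) ^ d *
            ((l+d).choose l : MvPolynomial (Fin 2) k)
          = (X 0 : MvPolynomial (Fin 2) k) ^ (2*p*l + p*1*d) *
            (W ^ l * (X 1 : MvPolynomial (Fin 2) k) ^ (p*(p-1)*d) *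
              ((l+d).choose l : MvPolynomial (Fin 2) k)) from by ring]
      rw [aux_coeff_X0_pow_mul _ _ _ (by rw [hM0]; nlinarith), smul_zero]
    · intro h0
      exact absurd (Finset.mem_range.mpr (by omega)) h0
  · rw [if_neg hbb]
    apply ((aux_S_hom p hp2).pow β').coeff_eq_zero
    rw [aux_degree_st, hdegM]
    intro heq
    exact hbb (Nat.eq_of_mul_eq_mul_left (by positivity) heq.symm)

set_option maxHeartbeats 4000000 in
set_option maxRecDepth 8000 in
/-- Let `p` be an odd prime, `k` a field of characteristic `p`, and `H* = k[x,y]` the Hopf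
algebra with `x` primitive and
`ψ(y) = y ⊗ 1 + 1 ⊗ y + Σ_{i=1}^{p−1} (1/(i!(p−i)!)) x^{pi} ⊗ x^{p(p−i)}`.
Then the primitives of `H*` are exactly the span of `{x^{p^m} : m ≥ 0}`; in particular `y` is
not primitive. -/
theorem stmt_19 (p : ℕ) (hp : p.Prime) (hodd : Odd p)
    (k : Type*) [Field k] [CharP k p]
    (ψ : MvPolynomial (Fin 2) k →ₐ[k] MvPolynomial (Fin 2) k ⊗[k] MvPolynomial (Fin 2) k)
    (hx : ψ (X 0) = (X 0 : MvPolynomial (Fin 2) k) ⊗ₜ[k] (1 : MvPolynomial (Fin 2) k) +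
      (1 : MvPolynomial (Fin 2) k) ⊗ₜ[k] (X 0 : MvPolynomial (Fin 2) k))
    (hy : ψ (X 1) = (X 1 : MvPolynomial (Fin 2) k) ⊗ₜ[k] (1 : MvPolynomial (Fin 2) k) +
      (1 : MvPolynomial (Fin 2) k) ⊗ₜ[k] (X 1 : MvPolynomial (Fin 2) k) +
      ∑ i ∈ Finset.Ioo 0 p,
        ((i.factorial * (p - i).factorial : k))⁻¹ •
          (((X 0 : MvPolynomial (Fin 2) k) ^ (p * i)) ⊗ₜ[k]
            ((X 0 : MvPolynomial (Fin 2) k) ^ (p * (p - i))))) :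
    ∀ z : MvPolynomial (Fin 2) k,
      (ψ z = z ⊗ₜ[k] (1 : MvPolynomial (Fin 2) k) + (1 : MvPolynomial (Fin 2) k) ⊗ₜ[k] z) ↔
        z ∈ Submodule.span k
          {f : MvPolynomial (Fin 2) k | ∃ m : ℕ, f = (X 0 : MvPolynomial (Fin 2) k) ^ p ^ m} := by
  haveI : Fact p.Prime := ⟨hp⟩
  have hp2 : 2 ≤ p := hp.two_le
  intro z
  constructor
  · -- forward direction
    intro hz
    set S' : MvPolynomial (Fin 2) k := ∑ i ∈ Finset.Ioo 0 p,
      ((i.factorial * (p - i).factorial : k))⁻¹ •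
        ((X 0 : MvPolynomial (Fin 2) k) ^ (p * i) * (X 1 : MvPolynomial (Fin 2) k) ^ (p * (p - i)))
      with hS'
    set F : MvPolynomial (Fin 2) k →ₐ[k] Polynomial (MvPolynomial (Fin 2) k) :=
      aeval ![Polynomial.C (X 0), 0] with hF
    set G : MvPolynomial (Fin 2) k →ₐ[k] Polynomial (MvPolynomial (Fin 2) k) :=
      aeval ![Polynomial.C (X 1), Polynomial.X] with hG
    set μ : MvPolynomial (Fin 2) k ⊗[k] MvPolynomial (Fin 2) k →ₐ[k]
        Polynomial (MvPolynomial (Fin 2) k) :=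
      Algebra.TensorProduct.lift F G (fun a b => Commute.all _ _) with hμ
    have hμt : ∀ (u v : MvPolynomial (Fin 2) k), μ (u ⊗ₜ[k] v) = F u * G v := fun u v =>
      Algebra.TensorProduct.lift_tmul _ _ _ _ _
    have hFX0 : F (X 0) = Polynomial.C (X 0) := by
      rw [hF]; simp
    have hFX1 : F (X 1) = 0 := by
      rw [hF]; simp
    have hGX0 : G (X 0) = Polynomial.C (X 1) := by
      rw [hG]; simp
    have hGX1 : G (X 1) = Polynomial.X := by
      rw [hG]; simp
    have hμψ : ∀ w, μ (ψ w) =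
        aeval ![Polynomial.C (X 0 + X 1 : MvPolynomial (Fin 2) k),
          Polynomial.X + Polynomial.C S'] w := by
      intro w
      have : μ.comp ψ = aeval ![Polynomial.C (X 0 + X 1 : MvPolynomial (Fin 2) k),
          Polynomial.X + Polynomial.C S'] := by
        apply MvPolynomial.algHom_ext
        intro i
        fin_cases i
        · show μ (ψ (X 0)) = _
          rw [hx, map_add, hμt, hμt, hFX0, hGX0, map_one, map_one, mul_one, one_mul]
          simp [map_add]
        · show μ (ψ (X 1)) = (aeval ![Polynomial.C (X 0 + X 1 : MvPolynomial (Fin 2) k),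
            Polynomial.X + Polynomial.C S']) (X 1)
          rw [aeval_X]
          simp only [Matrix.cons_val_one, Matrix.head_cons]
          rw [hy, map_add, map_add, hμt, hμt, hFX1, hGX1, map_one, map_one, zero_mul, one_mul,
            map_sum, hS', map_sum, zero_add]
          congr 1
          apply Finset.sum_congr rfl
          intro i _
          rw [map_smul, hμt, map_pow, map_pow, hFX0, hGX0, ← map_pow, ← map_pow, ← map_mul,
            Polynomial.smul_C]
      exact DFunLike.congr_fun this w
    have hμz : aeval ![Polynomial.C (X 0 + X 1 : MvPolynomial (Fin 2) k),
        Polynomial.X + Polynomial.C S'] z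
        = aeval ![Polynomial.C (X 0 : MvPolynomial (Fin 2) k),
            (0 : Polynomial (MvPolynomial (Fin 2) k))] z
          + aeval ![Polynomial.C (X 1 : MvPolynomial (Fin 2) k), Polynomial.X] z := by
      rw [← hμψ z, hz, map_add, hμt, hμt, map_one, map_one, mul_one, one_mul, hF, hG]
    set τ : Polynomial (MvPolynomial (Fin 2) k) →ₐ[k] Polynomial (MvPolynomial (Fin 2) k) :=
      (Polynomial.aeval (Polynomial.X - Polynomial.C S')).restrictScalars k with hτ
    have hτC : ∀ r : MvPolynomial (Fin 2) k, τ (Polynomial.C r) = Polynomial.C r := fun r => by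
      rw [hτ]; exact Polynomial.aeval_C _ r
    have hτX : τ Polynomial.X = Polynomial.X - Polynomial.C S' := by
      rw [hτ]; exact Polynomial.aeval_X _
    have happ : ∀ v : Fin 2 → Polynomial (MvPolynomial (Fin 2) k),
        τ (aeval v z) = aeval (fun i => τ (v i)) z := fun v =>
      DFunLike.congr_fun (MvPolynomial.comp_aeval v τ) z
    have main : aeval ![Polynomial.C (X 0 + X 1 : MvPolynomial (Fin 2) k), Polynomial.X] z
        = aeval ![Polynomial.C (X 0 : MvPolynomial (Fin 2) k),
            (0 : Polynomial (MvPolynomial (Fin 2) k))] z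
          + aeval ![Polynomial.C (X 1 : MvPolynomial (Fin 2) k),
              Polynomial.X - Polynomial.C S'] z := by
      have e1 : (fun i => τ (![Polynomial.C (X 0 + X 1 : MvPolynomial (Fin 2) k),
          Polynomial.X + Polynomial.C S'] i))
          = ![Polynomial.C (X 0 + X 1 : MvPolynomial (Fin 2) k), Polynomial.X] := by
        funext i
        fin_cases i
        · show τ (Polynomial.C (X 0 + X 1 : MvPolynomial (Fin 2) k))
            = Polynomial.C (X 0 + X 1 : MvPolynomial (Fin 2) k)
          exact hτC _
        · show τ (Polynomial.X + Polynomial.C S') = Polynomial.X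
          rw [map_add, hτX, hτC, sub_add_cancel]
      have e2 : (fun i => τ (![Polynomial.C (X 0 : MvPolynomial (Fin 2) k),
          (0 : Polynomial (MvPolynomial (Fin 2) k))] i))
          = ![Polynomial.C (X 0 : MvPolynomial (Fin 2) k),
              (0 : Polynomial (MvPolynomial (Fin 2) k))] := by
        funext i
        fin_cases i
        · show τ (Polynomial.C (X 0 : MvPolynomial (Fin 2) k))
            = Polynomial.C (X 0 : MvPolynomial (Fin 2) k)
          exact hτC _
        · show τ 0 = 0
          exact map_zero τ
      have e3 : (fun i => τ (![Polynomial.C (X 1 : MvPolynomial (Fin 2) k), Polynomial.X] i))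
          = ![Polynomial.C (X 1 : MvPolynomial (Fin 2) k),
              Polynomial.X - Polynomial.C S'] := by
        funext i
        fin_cases i
        · show τ (Polynomial.C (X 1 : MvPolynomial (Fin 2) k))
            = Polynomial.C (X 1 : MvPolynomial (Fin 2) k)
          exact hτC _
        · show τ Polynomial.X = Polynomial.X - Polynomial.C S'
          exact hτX
      calc aeval ![Polynomial.C (X 0 + X 1 : MvPolynomial (Fin 2) k), Polynomial.X] z
          = aeval (fun i => τ (![Polynomial.C (X 0 + X 1 : MvPolynomial (Fin 2) k),
              Polynomial.X + Polynomial.C S'] i)) z := by rw [e1]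
        _ = τ (aeval ![Polynomial.C (X 0 + X 1 : MvPolynomial (Fin 2) k),
              Polynomial.X + Polynomial.C S'] z) := (happ _).symm
        _ = τ (aeval ![Polynomial.C (X 0 : MvPolynomial (Fin 2) k),
              (0 : Polynomial (MvPolynomial (Fin 2) k))] z
            + aeval ![Polynomial.C (X 1 : MvPolynomial (Fin 2) k), Polynomial.X] z) :=
          congrArg τ hμz
        _ = τ (aeval ![Polynomial.C (X 0 : MvPolynomial (Fin 2) k),
              (0 : Polynomial (MvPolynomial (Fin 2) k))] z)
            + τ (aeval ![Polynomial.C (X 1 : MvPolynomial (Fin 2) k), Polynomial.X] z) :=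
          map_add τ _ _
        _ = aeval (fun i => τ (![Polynomial.C (X 0 : MvPolynomial (Fin 2) k),
              (0 : Polynomial (MvPolynomial (Fin 2) k))] i)) z
            + aeval (fun i => τ (![Polynomial.C (X 1 : MvPolynomial (Fin 2) k),
              Polynomial.X] i)) z := by rw [happ, happ]
        _ = _ := by rw [e2, e3]
    have mainsum :
        (∑ m ∈ z.support, coeff m z •
          ((Polynomial.C (X 0 + X 1 : MvPolynomial (Fin 2) k)) ^ (m 0) * Polynomial.X ^ (m 1)))
        = (∑ m ∈ z.support, coeff m z •
          ((Polynomial.C (X 0 : MvPolynomial (Fin 2) k)) ^ (m 0) *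
            (0 : Polynomial (MvPolynomial (Fin 2) k)) ^ (m 1)))
        + (∑ m ∈ z.support, coeff m z •
          ((Polynomial.C (X 1 : MvPolynomial (Fin 2) k)) ^ (m 0) *
            (Polynomial.X - Polynomial.C S') ^ (m 1))) := by
      have h := main
      rw [aux_aeval_support z, aux_aeval_support z, aux_aeval_support z] at h
      simpa only [Matrix.cons_val_zero, Matrix.cons_val_one, Matrix.head_cons] using h
    have ej : ∀ j : ℕ,
        (∑ m ∈ z.support, coeff m z •
          (if m 1 = j then (X 0 + X 1 : MvPolynomial (Fin 2) k) ^ (m 0) else 0))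
        = (∑ m ∈ z.support, coeff m z •
          (if m 1 = 0 ∧ j = 0 then (X 0 : MvPolynomial (Fin 2) k) ^ (m 0) else 0))
        + (∑ m ∈ z.support, coeff m z • ((X 1 : MvPolynomial (Fin 2) k) ^ (m 0) *
            ((-S') ^ (m 1 - j) * (((m 1).choose j : MvPolynomial (Fin 2) k))))) := by
      intro j
      have h := congrArg (fun q => q.coeff j) mainsum
      simpa only [Polynomial.finset_sum_coeff, Polynomial.coeff_add, Polynomial.coeff_smul,
        aux_T1, aux_T2, aux_T3, smul_ite, smul_zero] using h
    -- the projection killing X 1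
    set π : MvPolynomial (Fin 2) k →ₐ[k] MvPolynomial (Fin 2) k :=
      aeval ![X 0, 0] with hπ
    have hπ0 : π (X 0) = X 0 := by rw [hπ]; simp
    have hπ1 : π (X 1) = 0 := by rw [hπ]; simp
    have hπS : π S' = 0 := by
      rw [hS', map_sum]
      apply Finset.sum_eq_zero
      intro i hi
      rw [Finset.mem_Ioo] at hi
      rw [map_smul, map_mul, map_pow, map_pow, hπ1,
        zero_pow (Nat.mul_ne_zero (by omega) (by omega)), mul_zero, smul_zero]
    have claim1 : ∀ m ∈ z.support, 1 ≤ m 1 → m 0 = 0 := by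
      intro m hm h1
      by_contra hα0
      have hα : 1 ≤ m 0 := Nat.one_le_iff_ne_zero.mpr hα0
      have hj1 : ¬ (m 1 = 0) := by omega
      have hj := congrArg π (ej (m 1))
      simp only [map_add, map_sum, map_smul, apply_ite π, map_pow, map_mul, map_add, map_neg,
        map_zero, map_natCast, hπ0, hπ1, hπS, add_zero, neg_zero, hj1, and_false, if_false,
        smul_zero, Finset.sum_const_zero, zero_add] at hj
      have h2 := congrArg (coeff (Finsupp.single 0 (m 0))) hj
      simp only [coeff_sum, coeff_smul, apply_ite (coeff (Finsupp.single (0 : Fin 2) (m 0))),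
        coeff_zero] at h2
      rw [Finset.sum_eq_single m] at h2
      · rw [if_pos rfl, X_pow_eq_monomial, coeff_monomial, if_pos rfl, smul_eq_mul, mul_one] at h2
        have hR0 : ∑ m' ∈ z.support, coeff m' z •
            coeff (Finsupp.single (0 : Fin 2) (m 0))
              ((0 : MvPolynomial (Fin 2) k) ^ (m' 0) *
                ((0 : MvPolynomial (Fin 2) k) ^ (m' 1 - m 1) *
                  ((m' 1).choose (m 1) : MvPolynomial (Fin 2) k))) = 0 := by
          apply Finset.sum_eq_zero
          intro m' _
          rcases Nat.eq_zero_or_pos (m' 0) with h0 | h0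
          · rw [h0, pow_zero, one_mul]
            rcases Nat.eq_zero_or_pos (m' 1 - m 1) with h2' | h2'
            · rw [h2', pow_zero, one_mul, ← C_eq_coe_nat, coeff_C,
                if_neg (by
                  intro hh
                  have hhh := DFunLike.congr_fun hh (0 : Fin 2)
                  simp [Finsupp.single_apply] at hhh
                  omega), smul_zero]
            · rw [zero_pow (by omega), zero_mul, coeff_zero, smul_zero]
          · rw [zero_pow (by omega), zero_mul, coeff_zero, smul_zero]
        rw [hR0] at h2
        exact (mem_support_iff.mp hm) h2
      · intro m' hm' hne
        by_cases hc : m' 1 = m 1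
        · rw [if_pos hc, X_pow_eq_monomial, coeff_monomial, if_neg, smul_zero]
          intro hh
          have h0 := DFunLike.congr_fun hh (0 : Fin 2)
          simp [Finsupp.single_apply] at h0
          exact hne (aux_fin2_ext h0 hc)
        · rw [if_neg hc, smul_zero]
      · intro hmem
        exact absurd hm hmem
    have hfac_ne : ∀ m' : ℕ, m' < p → ((m'.factorial : k) ≠ 0) := by
      intro m' hm' h0
      rw [CharP.cast_eq_zero_iff k p] at h0
      have := (Nat.Prime.dvd_factorial hp).mp h0
      omega
    have hlam1 : ((Nat.factorial 1 : k) * ((p - 1).factorial : k))⁻¹ ≠ 0 :=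
      inv_ne_zero (mul_ne_zero (hfac_ne 1 (by omega)) (hfac_ne (p-1) (by omega)))
    have hC1 : ((-1 : MvPolynomial (Fin 2) k)) = C (-1 : k) := by simp
    have claim2 : ∀ m ∈ z.support, m 1 = 0 := by
      intro m hm
      by_contra hβ0
      have hβ : 1 ≤ m 1 := by omega
      have hm0 : m 0 = 0 := claim1 m hm hβ
      have h2 := congrArg (coeff (Finsupp.single (0 : Fin 2) (p * m 1) +
        Finsupp.single 1 (p * (p-1) * m 1))) (ej 0)
      set M : Fin 2 →₀ ℕ := Finsupp.single (0 : Fin 2) (p * m 1) +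
        Finsupp.single 1 (p * (p-1) * m 1) with hMdef
      have hM0e : M 0 = p * m 1 := by rw [hMdef]; simp
      have hM1e : M 1 = p * (p-1) * m 1 := by rw [hMdef]; simp
      have hM0ne : M 0 ≠ 0 := by
        rw [hM0e]; exact Nat.mul_ne_zero (by omega) (by omega)
      have hM1ne : M 1 ≠ 0 := by
        rw [hM1e]
        exact Nat.mul_ne_zero (Nat.mul_ne_zero (by omega) (by omega)) (by omega)
      simp only [coeff_add, coeff_sum, coeff_smul, apply_ite (coeff M), coeff_zero, eq_self_iff_true,
        and_true, Nat.sub_zero, Nat.choose_zero_right, Nat.cast_one, mul_one] at h2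
      have hLHS : (∑ m' ∈ z.support, coeff m' z •
          (if m' 1 = 0 then coeff M ((X 0 + X 1 : MvPolynomial (Fin 2) k) ^ (m' 0)) else 0))
          = 0 := by
        apply Finset.sum_eq_zero
        intro m' _
        by_cases hc : m' 1 = 0
        · rw [if_pos hc, hMdef, aux_coeff_A_pow]
          by_cases hd : p * m 1 + p * (p-1) * m 1 = m' 0
          · rw [if_pos hd]
            have hdeg : p * m 1 + p * (p - 1) * m 1 = p * p * m 1 := by
              have hp1 : (p - 1) + 1 = p := by omega
              calc p * m 1 + p * (p - 1) * m 1 = p * ((p - 1) + 1) * m 1 := by ring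
                _ = p * p * m 1 := by rw [hp1]
            have hcast : ((m' 0).choose (p * m 1) : k) = 0 := by
              rw [← hd, hdeg]
              exact (CharP.cast_eq_zero_iff k p _).mpr (aux_dvd_choose_p2b hp (m 1) hβ)
            rw [hcast, smul_zero]
          · rw [if_neg hd, smul_zero]
        · rw [if_neg hc, smul_zero]
      have hMID : (∑ m' ∈ z.support, coeff m' z •
          (if m' 1 = 0 then coeff M ((X 0 : MvPolynomial (Fin 2) k) ^ (m' 0)) else 0)) = 0 := by
        apply Finset.sum_eq_zero
        intro m' _
        by_cases hc : m' 1 = 0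
        · rw [if_pos hc, aux_coeff_X0_pow _ _ hM1ne, smul_zero]
        · rw [if_neg hc, smul_zero]
      have hR : (∑ m' ∈ z.support, coeff m' z •
          coeff M ((X 1 : MvPolynomial (Fin 2) k) ^ (m' 0) * (-S') ^ (m' 1)))
          = coeff m z • ((-1 : k) ^ (m 1) *
              (((Nat.factorial 1 : k) * ((p - 1).factorial : k))⁻¹) ^ (m 1)) := by
        rw [Finset.sum_eq_single m]
        · rw [hm0, pow_zero, one_mul, neg_pow, hC1, ← map_pow, coeff_C_mul, hMdef, hS',
            aux_coeff_S_pow p hp2 (m 1) (m 1) hβ hβ, if_pos rfl]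
        · intro m' hm' hne
          by_cases hc : m' 1 = 0
          · rw [hc, pow_zero, mul_one, aux_coeff_X1_pow _ _ hM0ne, smul_zero]
          · have h1' : 1 ≤ m' 1 := by omega
            have h0' : m' 0 = 0 := claim1 m' hm' h1'
            rw [h0', pow_zero, one_mul, neg_pow, hC1, ← map_pow, coeff_C_mul, hMdef, hS',
              aux_coeff_S_pow p hp2 (m 1) (m' 1) hβ h1',
              if_neg (fun hq => hne (aux_fin2_ext (by rw [h0', hm0]) hq)), mul_zero, smul_zero]
        · intro habs; exact absurd hm habs
      rw [hLHS, hMID, hR, zero_add] at h2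
      have hvne : ((-1 : k) ^ (m 1) *
          (((Nat.factorial 1 : k) * ((p - 1).factorial : k))⁻¹) ^ (m 1)) ≠ 0 :=
        mul_ne_zero (pow_ne_zero _ (neg_ne_zero.mpr one_ne_zero)) (pow_ne_zero _ hlam1)
      rw [smul_eq_mul] at h2
      rcases mul_eq_zero.mp h2.symm with h | h
      · exact (mem_support_iff.mp hm) h
      · exact hvne h
    -- final classification
    rw [← support_sum_monomial_coeff z]
    apply Submodule.sum_mem
    intro m hm
    have hm1 : m 1 = 0 := claim2 m hm
    have hmono : ∀ e : ℕ, m 0 = e →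
        monomial m (coeff m z) = coeff m z • (X 0 : MvPolynomial (Fin 2) k) ^ e := by
      intro e he
      have hms : m = Finsupp.single 0 e := by
        apply aux_fin2_ext
        · simp [he]
        · simp [hm1, Finsupp.single_apply]
      rw [X_pow_eq_monomial, smul_monomial, smul_eq_mul, mul_one, hms]
    by_cases hα0 : m 0 = 0
    · exfalso
      have hmzero : m = 0 := by
        apply aux_fin2_ext
        · rw [hα0]; rfl
        · rw [hm1]; rfl
      have h00 : (0 : Fin 2 →₀ ℕ) = Finsupp.single (0 : Fin 2) 0 + Finsupp.single 1 0 := by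
        simp
      have h2 := congrArg (coeff (0 : Fin 2 →₀ ℕ)) (ej 0)
      simp only [coeff_add, coeff_sum, coeff_smul, apply_ite (coeff (0 : Fin 2 →₀ ℕ)), coeff_zero,
        eq_self_iff_true, and_true, Nat.sub_zero, Nat.choose_zero_right, Nat.cast_one,
        mul_one] at h2
      have hA0 : ∀ a : ℕ, coeff (0 : Fin 2 →₀ ℕ) ((X 0 + X 1 : MvPolynomial (Fin 2) k) ^ a)
          = if a = 0 then 1 else 0 := by
        intro a
        rw [h00, aux_coeff_A_pow]
        by_cases ha : a = 0
        · subst ha; simp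
        · rw [if_neg (by omega), if_neg ha]
      have hX0' : ∀ a : ℕ, coeff (0 : Fin 2 →₀ ℕ) ((X 0 : MvPolynomial (Fin 2) k) ^ a)
          = if a = 0 then 1 else 0 := by
        intro a
        rw [X_pow_eq_monomial, coeff_monomial]
        by_cases ha : a = 0
        · subst ha; simp
        · rw [if_neg (by
            intro hh
            have := DFunLike.congr_fun hh (0 : Fin 2)
            simp [Finsupp.single_apply] at this
            exact ha this), if_neg ha]
      have hX1' : ∀ a : ℕ, coeff (0 : Fin 2 →₀ ℕ) ((X 1 : MvPolynomial (Fin 2) k) ^ a)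
          = if a = 0 then 1 else 0 := by
        intro a
        rw [X_pow_eq_monomial, coeff_monomial]
        by_cases ha : a = 0
        · subst ha; simp
        · rw [if_neg (by
            intro hh
            have := DFunLike.congr_fun hh (1 : Fin 2)
            simp [Finsupp.single_apply] at this
            exact ha this), if_neg ha]
      have hsingle : ∀ (f : (Fin 2 →₀ ℕ) → ℕ), True := fun _ => trivial
      have hL : (∑ m' ∈ z.support, coeff m' z •
          (if m' 1 = 0 then coeff (0 : Fin 2 →₀ ℕ)
            ((X 0 + X 1 : MvPolynomial (Fin 2) k) ^ (m' 0)) else 0)) = coeff m z := by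
        rw [Finset.sum_eq_single m]
        · rw [if_pos hm1, hA0, if_pos hα0, smul_eq_mul, mul_one]
        · intro m' hm' hne
          by_cases hc : m' 1 = 0
          · rw [if_pos hc, hA0]
            by_cases hc0 : m' 0 = 0
            · exact absurd (aux_fin2_ext (by rw [hc0, hα0]) (by rw [hc, hm1])) hne
            · rw [if_neg hc0, smul_zero]
          · rw [if_neg hc, smul_zero]
        · intro habs; exact absurd hm habs
      have hM' : (∑ m' ∈ z.support, coeff m' z •
          (if m' 1 = 0 then coeff (0 : Fin 2 →₀ ℕ)
            ((X 0 : MvPolynomial (Fin 2) k) ^ (m' 0)) else 0)) = coeff m z := by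
        rw [Finset.sum_eq_single m]
        · rw [if_pos hm1, hX0', if_pos hα0, smul_eq_mul, mul_one]
        · intro m' hm' hne
          by_cases hc : m' 1 = 0
          · rw [if_pos hc, hX0']
            by_cases hc0 : m' 0 = 0
            · exact absurd (aux_fin2_ext (by rw [hc0, hα0]) (by rw [hc, hm1])) hne
            · rw [if_neg hc0, smul_zero]
          · rw [if_neg hc, smul_zero]
        · intro habs; exact absurd hm habs
      have hRR : (∑ m' ∈ z.support, coeff m' z •
          coeff (0 : Fin 2 →₀ ℕ) ((X 1 : MvPolynomial (Fin 2) k) ^ (m' 0) * (-S') ^ (m' 1)))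
          = coeff m z := by
        rw [Finset.sum_eq_single m]
        · rw [hm1, pow_zero, mul_one, hX1', if_pos hα0, smul_eq_mul, mul_one]
        · intro m' hm' hne
          rw [claim2 m' hm', pow_zero, mul_one, hX1']
          by_cases hc0 : m' 0 = 0
          · exact absurd (aux_fin2_ext (by rw [hc0, hα0]) (by rw [claim2 m' hm', hm1])) hne
          · rw [if_neg hc0, smul_zero]
        · intro habs; exact absurd hm habs
      rw [hL, hM', hRR] at h2
      exact (mem_support_iff.mp hm) (left_eq_add.mp h2)
    · -- m 0 ≥ 1 : must be a p-th power
      have hα1 : 1 ≤ m 0 := by omega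
      have hppow : ∃ w : ℕ, m 0 = p ^ w := by
        by_contra hno
        push_neg at hno
        obtain ⟨s, hs0, hsα, hsdvd⟩ := aux_exists_choose_not_dvd hp hα1 hno
        have h2 := congrArg (coeff (Finsupp.single (0 : Fin 2) s +
          Finsupp.single 1 (m 0 - s))) (ej 0)
        set N : Fin 2 →₀ ℕ := Finsupp.single (0 : Fin 2) s + Finsupp.single 1 (m 0 - s)
          with hNdef
        have hN0e : N 0 = s := by rw [hNdef]; simp
        have hN1e : N 1 = m 0 - s := by rw [hNdef]; simp
        have hN0ne : N 0 ≠ 0 := by omega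
        have hN1ne : N 1 ≠ 0 := by omega
        simp only [coeff_add, coeff_sum, coeff_smul, apply_ite (coeff N), coeff_zero, eq_self_iff_true,
          and_true, Nat.sub_zero, Nat.choose_zero_right, Nat.cast_one, mul_one] at h2
        have hL : (∑ m' ∈ z.support, coeff m' z •
            (if m' 1 = 0 then coeff N ((X 0 + X 1 : MvPolynomial (Fin 2) k) ^ (m' 0)) else 0))
            = coeff m z • ((m 0).choose s : k) := by
          rw [Finset.sum_eq_single m]
          · rw [if_pos hm1, hNdef, aux_coeff_A_pow, if_pos (by omega)]
          · intro m' hm' hne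
            by_cases hc : m' 1 = 0
            · rw [if_pos hc, hNdef, aux_coeff_A_pow]
              by_cases hd : s + (m 0 - s) = m' 0
              · exact absurd (aux_fin2_ext (by omega) (by rw [hc, hm1])) hne
              · rw [if_neg hd, smul_zero]
            · rw [if_neg hc, smul_zero]
          · intro habs; exact absurd hm habs
        have hM' : (∑ m' ∈ z.support, coeff m' z •
            (if m' 1 = 0 then coeff N ((X 0 : MvPolynomial (Fin 2) k) ^ (m' 0)) else 0))
            = 0 := by
          apply Finset.sum_eq_zero
          intro m' _
          by_cases hc : m' 1 = 0
          · rw [if_pos hc, aux_coeff_X0_pow _ _ hN1ne, smul_zero]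
          · rw [if_neg hc, smul_zero]
        have hRR : (∑ m' ∈ z.support, coeff m' z •
            coeff N ((X 1 : MvPolynomial (Fin 2) k) ^ (m' 0) * (-S') ^ (m' 1))) = 0 := by
          apply Finset.sum_eq_zero
          intro m' hm'
          rw [claim2 m' hm', pow_zero, mul_one, aux_coeff_X1_pow _ _ hN0ne, smul_zero]
        rw [hL, hM', hRR, zero_add, smul_eq_mul] at h2
        rcases mul_eq_zero.mp h2 with h | h
        · exact (mem_support_iff.mp hm) h
        · exact absurd ((CharP.cast_eq_zero_iff k p _).mp h) hsdvd
      obtain ⟨w, hw⟩ := hppow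
      rw [hmono (p ^ w) hw]
      exact Submodule.smul_mem _ _ (Submodule.subset_span ⟨w, rfl⟩)
  · -- backward direction
    intro hspan
    have hε : ∃ ε : MvPolynomial (Fin 2) k ⊗[k] MvPolynomial (Fin 2) k →ₐ[k] k, True :=
      ⟨Algebra.TensorProduct.lift (aeval (fun _ => (0:k))) (aeval (fun _ => (0:k)))
        (fun a b => Commute.all _ _), trivial⟩
    obtain ⟨ε, -⟩ := hε
    have hinj : Function.Injective
        (algebraMap k (MvPolynomial (Fin 2) k ⊗[k] MvPolynomial (Fin 2) k)) := by
      intro a b hab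
      have := congrArg ε hab
      rwa [AlgHom.commutes, AlgHom.commutes] at this
    haveI : CharP (MvPolynomial (Fin 2) k ⊗[k] MvPolynomial (Fin 2) k) p :=
      charP_of_injective_algebraMap hinj p
    refine Submodule.span_induction ?_ ?_ ?_ ?_ hspan
    · rintro f ⟨m, rfl⟩
      rw [map_pow, hx, add_pow_char_pow, Algebra.TensorProduct.tmul_pow,
        Algebra.TensorProduct.tmul_pow, one_pow]
    · simp
    · intro a b _ _ ha hb
      rw [map_add, ha, hb, add_tmul, tmul_add]
      abel
    · intro c a _ ha
      rw [map_smul, ha, smul_add, TensorProduct.smul_tmul', TensorProduct.tmul_smul]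
end
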